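/- arXiv:2011.06418 — 7 statements merged into one kernel-verified Lean document; each statement's English description precedes it below -/
import Mathlib

section
/- (Prolongation Factor) Let X be a closed convex subset of a real normed vector space E and let u ∈ X with u ≠ 0. Then both (1 + G_X(u)/‖u‖) • u ∈ X and (1 − G_X(u)/‖u‖) • u ∈ X. -/
open Metric Set

/-- `G X u` is the infimum distance from `u` to the topological boundary (frontier) of `X`,
with the convention that it is `0` if the frontier is empty. -/
noncomputable def G {E : Type*} [NormedAddCommGroup E] (X : Set E) (u : E) : ℝ :=
  Metric.infDist u (frontier X)

/-- If `u ∈ X` and `v ∉ X` (with `X` closed), then the segment from `u` to `v` meets the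
frontier of `X` at a point no farther from `u` than `v` is. -/
lemma exists_frontier_dist_le {E : Type*} [NormedAddCommGroup E] [NormedSpace ℝ E]
    {X : Set E} (hX : IsClosed X) {u v : E} (hu : u ∈ X) (hv : v ∉ X) :
    ∃ w ∈ frontier X, dist u w ≤ dist u v := by
  set f : ℝ → E := fun t => u + t • (v - u) with hf
  have hfc : Continuous f := by fun_prop
  set S : Set ℝ := Icc (0 : ℝ) 1 ∩ f ⁻¹' X with hS
  have h0S : (0 : ℝ) ∈ S := by
    refine ⟨⟨le_refl _, zero_le_one⟩, ?_⟩
    simp [f, hu]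
  have hSne : S.Nonempty := ⟨0, h0S⟩
  have hSbdd : BddAbove S := BddAbove.mono (inter_subset_left) (bddAbove_Icc)
  have hSclosed : IsClosed S := isClosed_Icc.inter (hX.preimage hfc)
  set t₀ := sSup S with ht₀
  have ht₀S : t₀ ∈ S := hSclosed.csSup_mem hSne hSbdd
  obtain ⟨⟨ht₀0, ht₀1⟩, ht₀X⟩ := ht₀S
  have hne1 : t₀ ≠ 1 := by
    intro h
    apply hv
    rw [h] at ht₀X
    simpa [f] using ht₀X
  have ht₀lt1 : t₀ < 1 := lt_of_le_of_ne ht₀1 hne1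
  have hwfr : f t₀ ∈ frontier X := by
    constructor
    · exact subset_closure ht₀X
    · intro hint
      -- interior membership: find t > t₀ still in X
      have hnhds : f ⁻¹' (interior X) ∈ nhds t₀ :=
        hfc.continuousAt.preimage_mem_nhds (isOpen_interior.mem_nhds hint)
      obtain ⟨ε, hε, hball⟩ := Metric.mem_nhds_iff.1 hnhds
      set t := min 1 (t₀ + ε / 2) with htdef
      have ht₀t : t₀ ≤ t := le_min ht₀1 (by linarith)
      have htS : t ∈ S := by
        refine ⟨⟨ht₀0.trans ht₀t, min_le_left _ _⟩, ?_⟩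
        have : t ∈ Metric.ball t₀ ε := by
          rw [Metric.mem_ball, Real.dist_eq, abs_lt]
          have : t ≤ t₀ + ε / 2 := min_le_right _ _
          constructor <;> linarith
        have h2 : f t ∈ interior X := hball this
        show f t ∈ X
        exact interior_subset h2
      have : t ≤ t₀ := le_csSup hSbdd htS
      have : t₀ < t := lt_min ht₀lt1 (by linarith)
      linarith
  refine ⟨f t₀, hwfr, ?_⟩
  have : dist u (f t₀) = t₀ * ‖v - u‖ := by
    simp only [f, dist_eq_norm]
    rw [show u - (u + t₀ • (v - u)) = -(t₀ • (v - u)) by abel, norm_neg, norm_smul,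
      Real.norm_eq_abs, abs_of_nonneg ht₀0]
  rw [this, dist_eq_norm, show u - v = -(v - u) by abel, norm_neg]
  nlinarith [norm_nonneg (v - u)]

/-- Prolongation Factor (Theorem 2.3): for `u ∈ X` nonzero, the states
`(1 ± G_X(u)/‖u‖) • u` remain in `X`. -/
theorem prolongation_factor {E : Type*} [NormedAddCommGroup E] [NormedSpace ℝ E]
    (X : Set E) (hXclosed : IsClosed X) (hXconv : Convex ℝ X)
    {u : E} (hu : u ∈ X) (hu0 : u ≠ 0) :
    (1 + G X u / ‖u‖) • u ∈ X ∧ (1 - G X u / ‖u‖) • u ∈ X := by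
  have hGle : G X u ≤ infDist u Xᶜ := by
    by_cases hc : Xᶜ = ∅
    · have hXuniv : X = univ := by
        rw [← compl_compl X, hc, compl_empty]
      have : frontier X = ∅ := by rw [hXuniv, frontier_univ]
      simp [G, this, hc, Metric.infDist_empty, Metric.infDist_nonneg]
    · by_contra h
      push_neg at h
      obtain ⟨v, hvc, hvd⟩ := (Metric.infDist_lt_iff (nonempty_iff_ne_empty.2 hc)).1 h
      obtain ⟨w, hwf, hwd⟩ := exists_frontier_dist_le hXclosed hu hvc
      have : infDist u (frontier X) ≤ dist u w := Metric.infDist_le_dist_of_mem hwf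
      simp only [G] at hvd
      linarith
  have hball : Metric.closedBall u (G X u) ⊆ X := by
    intro x hx
    have : x ∈ Metric.closedBall u (infDist u Xᶜ) :=
      Metric.mem_closedBall.2 (le_trans (Metric.mem_closedBall.1 hx) hGle)
    have := Metric.closedBall_infDist_compl_subset_closure hu this
    rwa [hXclosed.closure_eq] at this
  have hG0 : 0 ≤ G X u := Metric.infDist_nonneg
  have hnu : (0:ℝ) < ‖u‖ := norm_pos_iff.2 hu0
  have hdist : ∀ s : ℝ, dist ((1 + s) • u) u = |s| * ‖u‖ := by
    intro s
    rw [dist_eq_norm, show (1 + s) • u - u = s • u by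
      rw [add_smul, one_smul]; abel, norm_smul, Real.norm_eq_abs]
  constructor
  · apply hball
    rw [Metric.mem_closedBall, hdist, abs_of_nonneg (div_nonneg hG0 hnu.le),
      div_mul_cancel₀ _ hnu.ne']
  · apply hball
    rw [Metric.mem_closedBall, show (1 : ℝ) - G X u / ‖u‖ = 1 + (-(G X u / ‖u‖)) by ring,
      hdist, abs_neg, abs_of_nonneg (div_nonneg hG0 hnu.le), div_mul_cancel₀ _ hnu.ne']
end

section
/- (Combined Distance) Let X be a closed convex subset of a real normed vector space E, let u₁, u₂ ∈ X, and let a₁, a₂ ≥ 0 with a₁ + a₂ = 1. Then G_X(a₁ • u₁ + a₂ • u₂) ≥ min (G_X(u₁)) (G_X(u₂)). -/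
/-- The open ball of radius `G X u` around a point `u ∈ X` lies in the interior of `X`. -/
lemma ball_G_subset_interior {E : Type*} [NormedAddCommGroup E] [NormedSpace ℝ E]
    (X : Set E) {u : E} (hu : u ∈ X) (hpos : 0 < G X u) :
    Metric.ball u (G X u) ⊆ interior X := by
  have hdisj : Metric.ball u (G X u) ⊆ (frontier X)ᶜ :=
    Metric.ball_infDist_subset_compl
  have hsub : Metric.ball u (G X u) ⊆ interior X ∪ (closure X)ᶜ := by
    intro v hv
    by_cases hc : v ∈ closure X
    · left
      by_contra hint
      exact hdisj hv ⟨hc, hint⟩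
    · right; exact hc
  have hconn : IsPreconnected (Metric.ball u (G X u)) :=
    (convex_ball u (G X u)).isPreconnected
  have huint : u ∈ interior X := by
    have hunf : u ∉ frontier X := hdisj (Metric.mem_ball_self hpos)
    by_contra hint
    exact hunf ⟨subset_closure hu, hint⟩
  have hdisj2 : Disjoint (interior X) (closure X)ᶜ :=
    Set.disjoint_compl_right_iff_subset.mpr (interior_subset.trans subset_closure)
  exact hconn.subset_left_of_subset_union isOpen_interior
    isClosed_closure.isOpen_compl hdisj2 hsub
    ⟨u, Metric.mem_ball_self hpos, huint⟩

/-- Combined Distance (Lemma 2.2): the distance to the boundary of a convex set is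
quasi-concave along convex combinations of points of the set. -/
theorem combined_distance {E : Type*} [NormedAddCommGroup E] [NormedSpace ℝ E]
    (X : Set E) (hXclosed : IsClosed X) (hXconv : Convex ℝ X)
    {u₁ u₂ : E} (h₁ : u₁ ∈ X) (h₂ : u₂ ∈ X)
    {a₁ a₂ : ℝ} (ha₁ : 0 ≤ a₁) (ha₂ : 0 ≤ a₂) (hsum : a₁ + a₂ = 1) :
    min (G X u₁) (G X u₂) ≤ G X (a₁ • u₁ + a₂ • u₂) := by
  set r := min (G X u₁) (G X u₂) with hr
  rcases le_or_gt r 0 with h0 | h0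
  · exact h0.trans Metric.infDist_nonneg
  · -- r > 0; show ball of radius r around the combination is in the interior
    have hr₁ : r ≤ G X u₁ := min_le_left _ _
    have hr₂ : r ≤ G X u₂ := min_le_right _ _
    set w := a₁ • u₁ + a₂ • u₂ with hw
    have hball : Metric.ball w r ⊆ interior X := by
      intro v hv
      have hd : dist v w < r := Metric.mem_ball.mp hv
      have h1 : u₁ + (v - w) ∈ interior X := by
        apply ball_G_subset_interior X h₁ (lt_of_lt_of_le h0 hr₁)
        have : dist (u₁ + (v - w)) u₁ = dist v w := by
          simp [dist_eq_norm]
        rw [Metric.mem_ball, this]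
        exact hd.trans_le hr₁
      have h2 : u₂ + (v - w) ∈ interior X := by
        apply ball_G_subset_interior X h₂ (lt_of_lt_of_le h0 hr₂)
        have : dist (u₂ + (v - w)) u₂ = dist v w := by
          simp [dist_eq_norm]
        rw [Metric.mem_ball, this]
        exact hd.trans_le hr₂
      have hvw : v = a₁ • (u₁ + (v - w)) + a₂ • (u₂ + (v - w)) := by
        have : a₁ • (u₁ + (v - w)) + a₂ • (u₂ + (v - w))
            = (a₁ • u₁ + a₂ • u₂) + (a₁ + a₂) • (v - w) := by
          simp [smul_add, add_smul]; abel
        rw [this, hsum, one_smul, ← hw]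
        abel
      rw [hvw]
      exact hXconv.interior h1 h2 ha₁ ha₂ hsum
    -- conclude: r ≤ infDist w (frontier X)
    by_contra hlt
    push_neg at hlt
    have hfr : (frontier X).Nonempty := by
      rcases Set.eq_empty_or_nonempty (frontier X) with he | hne
      · exfalso
        have : G X u₁ = 0 := by simp [G, he, Metric.infDist_empty]
        have : r ≤ 0 := by rw [hr, this]; exact min_le_left _ _ |>.trans le_rfl
        exact absurd this (not_le.mpr h0)
      · exact hne
    obtain ⟨y, hy, hdy⟩ := (Metric.infDist_lt_iff hfr).mp hlt
    have : y ∈ interior X := hball (by rwa [Metric.mem_ball, dist_comm])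
    exact hy.2 this
end

section
/- Let X be a closed convex subset of a real normed vector space E, let u₁, …, u_n ∈ X (n ≥ 1), and let a₁, …, a_n ≥ 0 with a₁ + ⋯ + a_n = 1. Then G_X(a₁ • u₁ + ⋯ + a_n • u_n) ≥ min over j of G_X(u_j). -/
open Set.Notation in
/-- A ball around a point of a closed set, of radius the distance to the frontier,
stays inside the set. -/
lemma ball_G_subset {E : Type*} [NormedAddCommGroup E] [NormedSpace ℝ E] {X : Set E}
    (hXclosed : IsClosed X) {u : E} (hu : u ∈ X) {r : ℝ} (hr : r ≤ G X u) :
    Metric.ball u r ⊆ X := by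
  intro w hw
  by_contra hwX
  have hball : Metric.ball u r ⊆ Metric.ball u (G X u) := Metric.ball_subset_ball hr
  have hdisj : Disjoint (frontier Xᶜ) (Metric.ball u r) := by
    rw [frontier_compl]
    exact ((Metric.disjoint_ball_infDist (s := frontier X)).symm).mono_right hball
  have hclopen : IsClopen ((Metric.ball u r) ↓∩ Xᶜ) :=
    isClopen_preimage_val hXclosed.isOpen_compl hdisj
  have hupos : u ∈ Metric.ball u r :=
    Metric.mem_ball_self (lt_of_le_of_lt dist_nonneg (Metric.mem_ball.1 hw))
  haveI : PreconnectedSpace (Metric.ball u r) :=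
    Subtype.preconnectedSpace (convex_ball u r).isPreconnected
  rcases isClopen_iff.1 hclopen with h | h
  · have : (⟨w, hw⟩ : Metric.ball u r) ∈ ((Metric.ball u r) ↓∩ Xᶜ) := hwX
    rw [h] at this
    exact this
  · have : (⟨u, hupos⟩ : Metric.ball u r) ∈ ((Metric.ball u r) ↓∩ Xᶜ) := by
      rw [h]; trivial
    exact this hu

/-- Finite convex-combination extension of Lemma 2.2 (Combined Distance). -/
theorem combined_distance_finset {E : Type*} [NormedAddCommGroup E] [NormedSpace ℝ E]
    (X : Set E) (hXclosed : IsClosed X) (hXconv : Convex ℝ X)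
    {ι : Type*} (s : Finset ι) (hs : s.Nonempty) (u : ι → E) (a : ι → ℝ)
    (hu : ∀ i ∈ s, u i ∈ X) (ha : ∀ i ∈ s, 0 ≤ a i) (hsum : ∑ i ∈ s, a i = 1) :
    s.inf' hs (fun j => G X (u j)) ≤ G X (∑ i ∈ s, a i • u i) := by
  set m := s.inf' hs (fun j => G X (u j)) with hm
  set v := ∑ i ∈ s, a i • u i with hv
  rcases Set.eq_empty_or_nonempty (frontier X) with hfr | hfr
  · obtain ⟨j, hj⟩ := hs
    have h1 : m ≤ G X (u j) := Finset.inf'_le _ hj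
    have h2 : G X (u j) = 0 := by simp [G, hfr]
    have h3 : G X v = 0 := by simp [G, hfr]
    rw [h3]; rw [h2] at h1; exact h1
  -- frontier nonempty
  by_contra hlt
  push_neg at hlt
  -- Claim: ball v m ⊆ X
  have hball : Metric.ball v m ⊆ X := by
    intro w hw
    have hdist : dist w v < m := Metric.mem_ball.1 hw
    have hweq : w = ∑ i ∈ s, a i • (u i + (w - v)) := by
      have : ∑ i ∈ s, a i • (u i + (w - v)) = v + (∑ i ∈ s, a i) • (w - v) := by
        simp only [smul_add, Finset.sum_add_distrib, hv, Finset.sum_smul]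
      rw [this, hsum, one_smul]
      abel
    rw [hweq]
    refine hXconv.sum_mem ha hsum fun i hi => ?_
    have hmem : u i + (w - v) ∈ Metric.ball (u i) m := by
      rw [Metric.mem_ball]
      simpa [dist_eq_norm] using hdist
    exact ball_G_subset hXclosed (hu i hi) (Finset.inf'_le (fun j => G X (u j)) hi) hmem
  -- so ball v m ⊆ interior X, disjoint from frontier
  obtain ⟨y, hy, hyd⟩ := (Metric.infDist_lt_iff hfr).1 hlt
  have hyball : y ∈ Metric.ball v m := by rwa [Metric.mem_ball, dist_comm]
  have hyint : y ∈ interior X := interior_maximal hball Metric.isOpen_ball hyball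
  exact (hy.2 : y ∉ interior X) hyint
end

section
/- Let X be a closed convex subset of a real normed vector space E, let u, v ∈ X, let w ∈ E with w ≠ 0, let a ∈ [0,1], and let s be a real number with |s| ≤ (min (G_X(u)) (G_X(v)))/‖w‖. Then (1 − a) • u + a • v + s • w ∈ X. -/
lemma add_mem_of_norm_le_G {E : Type*} [NormedAddCommGroup E] [NormedSpace ℝ E]
    {X : Set E} (hXclosed : IsClosed X) {u : E} (hu : u ∈ X) {z : E}
    (hz : ‖z‖ ≤ G X u) : u + z ∈ X := by
  by_contra h
  -- the segment from u to u + z meets the frontier of X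
  have hseg : (segment ℝ u (u + z) ∩ frontier X).Nonempty := by
    by_contra hempty
    rw [Set.not_nonempty_iff_eq_empty, ← Set.disjoint_iff_inter_eq_empty] at hempty
    have hsub : segment ℝ u (u + z) ⊆ interior X ∪ Xᶜ := by
      intro x hx
      by_cases hxX : x ∈ X
      · left
        have hnf : x ∉ frontier X := fun hf => hempty.ne_of_mem hx hf rfl
        rw [hXclosed.frontier_eq] at hnf
        by_contra hint
        exact hnf ⟨hxX, hint⟩
      · exact Or.inr hxX
    have hdisj : Disjoint (interior X) Xᶜ :=
      Set.disjoint_left.2 fun x hx hxc => hxc (interior_subset hx)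
    rcases (convex_segment u (u + z)).isPreconnected.subset_or_subset isOpen_interior
        hXclosed.isOpen_compl hdisj hsub with hsu | hsu
    · exact h (interior_subset (hsu (right_mem_segment ℝ u (u + z))))
    · exact (hsu (left_mem_segment ℝ u (u + z))) hu
  obtain ⟨p, hpseg, hpf⟩ := hseg
  rw [segment_eq_image' ℝ u (u + z)] at hpseg
  obtain ⟨t, ht, rfl⟩ := hpseg
  simp only [add_sub_cancel_left] at hpf ⊢
  have hdist : dist u (u + t • z) = t * ‖z‖ := by
    rw [dist_eq_norm]
    simp [norm_smul, abs_of_nonneg ht.1]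
  have h1 : G X u ≤ t * ‖z‖ := by
    have := Metric.infDist_le_dist_of_mem (x := u) hpf
    rwa [← hdist, G]
  have h2 : t * ‖z‖ ≤ ‖z‖ := by
    nlinarith [ht.2, norm_nonneg z]
  have hzne : ‖z‖ ≠ 0 := by
    intro h0
    rw [norm_eq_zero] at h0
    subst h0
    simp only [smul_zero, add_zero] at h
    exact h hu
  have ht1 : t = 1 := by
    have : ‖z‖ ≤ t * ‖z‖ := le_trans hz h1
    have hnz : 0 < ‖z‖ := lt_of_le_of_ne (norm_nonneg z) (Ne.symm hzne)
    nlinarith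
  subst ht1
  rw [one_smul] at hpf
  exact h (hXclosed.frontier_subset hpf)

/-- Key perturbed convex-combination step in the proof of Theorem 3.3 (Local Invariance),
combining Lemma 2.2 and Corollary 2.4. -/
theorem perturbed_convex_combination {E : Type*} [NormedAddCommGroup E] [NormedSpace ℝ E]
    (X : Set E) (hXclosed : IsClosed X) (hXconv : Convex ℝ X)
    {u v : E} (hu : u ∈ X) (hv : v ∈ X) {w : E} (hw : w ≠ 0)
    {a : ℝ} (ha : a ∈ Set.Icc (0 : ℝ) 1)
    {s : ℝ} (hs : |s| ≤ min (G X u) (G X v) / ‖w‖) :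
    (1 - a) • u + a • v + s • w ∈ X := by
  have hwpos : 0 < ‖w‖ := norm_pos_iff.2 hw
  have hnorm : ‖s • w‖ ≤ min (G X u) (G X v) := by
    rw [norm_smul, Real.norm_eq_abs]
    calc |s| * ‖w‖ ≤ (min (G X u) (G X v) / ‖w‖) * ‖w‖ := by
          exact mul_le_mul_of_nonneg_right hs hwpos.le
      _ = min (G X u) (G X v) := div_mul_cancel₀ _ hwpos.ne'
  have hu' : u + s • w ∈ X :=
    add_mem_of_norm_le_G hXclosed hu (hnorm.trans (min_le_left _ _))
  have hv' : v + s • w ∈ X :=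
    add_mem_of_norm_le_G hXclosed hv (hnorm.trans (min_le_right _ _))
  have := hXconv hu' hv' (by linarith [ha.2] : (0:ℝ) ≤ 1 - a) ha.1 (by ring)
  convert this using 1
  simp [smul_add]
  module
end

section
/- Let X be a closed convex subset of a real normed vector space E, let d > 0 be a real number, let u, v ∈ X with G_X(u) > 0 and G_X(v) > 0, and let w ∈ E with w ≠ 0. Then for every real Δt with 0 ≤ Δt ≤ min (1/d) (min (G_X(u)/‖w‖) (G_X(v)/‖w‖)), the state (1 − Δt·d) • u + (Δt·d) • v + Δt • w lies in X. -/
lemma closedBall_G_subset {E : Type*} [NormedAddCommGroup E] [NormedSpace ℝ E]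
    (X : Set E) (hXclosed : IsClosed X) {u : E} (hu : u ∈ X) (hGu : 0 < G X u) :
    Metric.closedBall u (G X u) ⊆ X := by
  have hfr : frontier X = X \ interior X := by
    rw [frontier, hXclosed.closure_eq]
  have hdisj : Disjoint (Metric.ball u (G X u)) (frontier X) :=
    Metric.disjoint_ball_infDist
  have hball : Metric.ball u (G X u) ⊆ interior X := by
    have hpre : IsPreconnected (Metric.ball u (G X u)) :=
      (convex_ball u (G X u)).isPreconnected
    have hsub : Metric.ball u (G X u) ⊆ interior X ∪ Xᶜ := by
      intro x hx
      by_cases hxX : x ∈ X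
      · left
        by_contra hxi
        exact (hdisj.ne_of_mem hx (by rw [hfr]; exact ⟨hxX, hxi⟩)) rfl
      · exact Or.inr hxX
    have huball : u ∈ Metric.ball u (G X u) := Metric.mem_ball_self hGu
    have huint : u ∈ interior X := by
      by_contra hui
      exact (hdisj.ne_of_mem huball (by rw [hfr]; exact ⟨hu, hui⟩)) rfl
    exact hpre.subset_left_of_subset_union isOpen_interior hXclosed.isOpen_compl
      (disjoint_compl_right.mono_left interior_subset) hsub ⟨u, huball, huint⟩
  calc Metric.closedBall u (G X u) = closure (Metric.ball u (G X u)) :=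
        (closure_ball u hGu.ne').symm
    _ ⊆ closure X := closure_mono (hball.trans interior_subset)
    _ = X := hXclosed.closure_eq

/-- Explicit time-step bound from the proof of Theorem 3.3 (Local Invariance):
the forward-Euler update, written as a convex combination of states `u, v ∈ X`
plus a perturbation `Δt • w`, remains in `X` under this bound on `Δt`. -/
theorem timestep_bound_invariance {E : Type*} [NormedAddCommGroup E] [NormedSpace ℝ E]
    (X : Set E) (hXclosed : IsClosed X) (hXconv : Convex ℝ X)
    {d : ℝ} (hd : 0 < d)
    {u v : E} (hu : u ∈ X) (hv : v ∈ X) (hGu : 0 < G X u) (hGv : 0 < G X v)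
    {w : E} (hw : w ≠ 0) :
    ∀ Δt : ℝ, 0 ≤ Δt → Δt ≤ min (1 / d) (min (G X u / ‖w‖) (G X v / ‖w‖)) →
      (1 - Δt * d) • u + (Δt * d) • v + Δt • w ∈ X := by
  intro t ht0 htle
  have hwpos : 0 < ‖w‖ := norm_pos_iff.mpr hw
  have ht1 : t ≤ 1 / d := le_trans htle (min_le_left _ _)
  have htu : t ≤ G X u / ‖w‖ := le_trans htle (le_trans (min_le_right _ _) (min_le_left _ _))
  have htv : t ≤ G X v / ‖w‖ := le_trans htle (le_trans (min_le_right _ _) (min_le_right _ _))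
  have hnorm : ∀ r : E, 0 < G X r → t ≤ G X r / ‖w‖ → r + t • w ∈ Metric.closedBall r (G X r) := by
    intro r hGr htr
    rw [Metric.mem_closedBall, dist_eq_norm]
    simp only [add_sub_cancel_left, norm_smul, Real.norm_eq_abs, abs_of_nonneg ht0]
    exact (le_div_iff₀ hwpos).mp htr
  have hu' : u + t • w ∈ X := closedBall_G_subset X hXclosed hu hGu (hnorm u hGu htu)
  have hv' : v + t • w ∈ X := closedBall_G_subset X hXclosed hv hGv (hnorm v hGv htv)
  have htd0 : 0 ≤ t * d := mul_nonneg ht0 hd.le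
  have htd1 : t * d ≤ 1 := by
    have h := mul_le_mul_of_nonneg_right ht1 hd.le
    rwa [one_div, inv_mul_cancel₀ hd.ne'] at h
  have key : (1 - t * d) • (u + t • w) + (t * d) • (v + t • w)
      = (1 - t * d) • u + (t * d) • v + t • w := by
    module
  rw [← key]
  exact hXconv hu' hv' (by linarith) htd0 (by ring)
end

section
/- (Global Invariance, abstract form) Let X be a closed convex subset of a real normed vector space E, and let K be a nonempty finite index set. For each k ∈ K let d_k > 0 be a real number, let u_k, v_k ∈ X with G_X(u_k) ≠ 0 and G_X(v_k) ≠ 0, and let w_k ∈ E be arbitrary. Then there exists a strictly positive real number Δt such that for every k ∈ K, (1 − Δt·d_k) • u_k + (Δt·d_k) • v_k + Δt • w_k ∈ X. -/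
/-- Global Invariance (Corollary 3.4, abstract form): a single strictly positive time step
exists for which all updated states of the Riemann difference scheme remain in `X`. -/
theorem global_invariance {E : Type*} [NormedAddCommGroup E] [NormedSpace ℝ E]
    (X : Set E) (hXclosed : IsClosed X) (hXconv : Convex ℝ X)
    {ι : Type*} (K : Finset ι) (hK : K.Nonempty)
    (d : ι → ℝ) (hd : ∀ k ∈ K, 0 < d k)
    (u v : ι → E) (hu : ∀ k ∈ K, u k ∈ X) (hv : ∀ k ∈ K, v k ∈ X)
    (hGu : ∀ k ∈ K, G X (u k) ≠ 0) (hGv : ∀ k ∈ K, G X (v k) ≠ 0)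
    (w : ι → E) :
    ∃ Δt : ℝ, 0 < Δt ∧ ∀ k ∈ K,
      (1 - Δt * d k) • u k + (Δt * d k) • v k + Δt • w k ∈ X := by
  -- each `u k` lies in the interior of `X`
  have hint : ∀ k ∈ K, u k ∈ interior X := by
    intro k hk
    by_contra h
    exact hGu k hk (Metric.infDist_zero_of_mem ⟨subset_closure (hu k hk), h⟩)
  -- for each `k`, a positive epsilon works
  have H : ∀ k : ι, ∃ ε : ℝ, 0 < ε ∧ (k ∈ K → ∀ t : ℝ, |t| < ε →
      (1 - t * d k) • u k + (t * d k) • v k + t • w k ∈ X) := by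
    intro k
    by_cases hk : k ∈ K
    · set f : ℝ → E := fun t => (1 - t * d k) • u k + (t * d k) • v k + t • w k with hf
      have hcont : Continuous f := by
        apply Continuous.add
        apply Continuous.add
        · exact ((continuous_const.sub (continuous_id.mul continuous_const)).smul
            continuous_const)
        · exact ((continuous_id.mul continuous_const).smul continuous_const)
        · exact continuous_id.smul continuous_const
      have hf0 : f 0 ∈ interior X := by
        have : f 0 = u k := by simp [hf]
        rw [this]; exact hint k hk
      have hev : ∀ᶠ t in nhds (0 : ℝ), f t ∈ interior X :=
        hcont.continuousAt.eventually_mem (isOpen_interior.mem_nhds hf0)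
      rw [Metric.eventually_nhds_iff] at hev
      obtain ⟨ε, hε, hball⟩ := hev
      refine ⟨ε, hε, fun _ t ht => ?_⟩
      have : dist t 0 < ε := by rwa [Real.dist_eq, sub_zero]
      exact interior_subset (hball this)
    · exact ⟨1, one_pos, fun h => absurd h hk⟩
  choose ε hεpos hεmem using H
  obtain ⟨k₀, hk₀, hmin⟩ := K.exists_min_image ε hK
  refine ⟨ε k₀ / 2, half_pos (hεpos k₀), fun k hk => ?_⟩
  apply hεmem k hk
  have h1 : ε k₀ / 2 < ε k₀ := half_lt_self (hεpos k₀)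
  have h2 : ε k₀ ≤ ε k := hmin k hk
  rw [abs_of_pos (half_pos (hεpos k₀))]
  linarith
end

section
/- (Conservation) Let N be a positive integer (number of elements), p ≥ 0, and let m ∈ ℝ^{p+1} be quadrature weights. Let C be a (p+1) × (p+2) real matrix satisfying the exactness property: for every g ∈ ℝ^{p+2}, ∑_{i} m_i (C·g)_i = g_{p+1} − g_0. For each k ∈ {1, …, N}, let u_k, u'_k ∈ ℝ^{p+1} and f̄_k ∈ ℝ^{p+2} satisfy the update u'_k = u_k − Δt (C·f̄_k) for a real number Δt, and assume the interface fluxes match: (f̄_k)_{p+1} = (f̄_{k+1})_0 for all 1 ≤ k < N. Then ∑_{k=1}^{N} ∑_{i} m_i (u'_k)_i = ∑_{k=1}^{N} ∑_{i} m_i (u_k)_i − Δt ((f̄_N)_{p+1} − (f̄_1)_0). -/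
open Matrix

/-- Conservation (Theorem 3.1): the Riemann difference scheme with forward Euler time
stepping is conservative, with the total quadrature changing only by the boundary
fluxes at the ends of the domain. Each element `k` carries `p+1` solution values `u k`
updated to `u' k`, and `p+2` auxiliary flux values `fbar k`; `C` is the matrix of
flux-derivative coefficients, exact in the sense that `∑ i, m i * (C·g) i = g_{p+1} − g_0`;
adjacent elements share a common interface flux value. -/
theorem conservation (N : ℕ) (hN : 0 < N) (p : ℕ)
    (m : Fin (p + 1) → ℝ) (C : Matrix (Fin (p + 1)) (Fin (p + 2)) ℝ)
    (hC : ∀ g : Fin (p + 2) → ℝ,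
      ∑ i, m i * (C.mulVec g) i = g (Fin.last (p + 1)) - g 0)
    (Δt : ℝ) (u u' : Fin N → Fin (p + 1) → ℝ) (fbar : Fin N → Fin (p + 2) → ℝ)
    (hupdate : ∀ k : Fin N, u' k = u k - Δt • (C.mulVec (fbar k)))
    (hinterface : ∀ (k : ℕ) (hk : k + 1 < N),
      fbar ⟨k, Nat.lt_of_succ_lt hk⟩ (Fin.last (p + 1)) = fbar ⟨k + 1, hk⟩ 0) :
    ∑ k : Fin N, ∑ i, m i * u' k i =
      ∑ k : Fin N, ∑ i, m i * u k i -
        Δt * (fbar ⟨N - 1, Nat.sub_lt hN Nat.one_pos⟩ (Fin.last (p + 1)) -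
              fbar ⟨0, hN⟩ 0) := by
  have step : ∀ k : Fin N, ∑ i, m i * u' k i =
      ∑ i, m i * u k i - Δt * (fbar k (Fin.last (p + 1)) - fbar k 0) := by
    intro k
    have := hC (fbar k)
    simp only [hupdate k, Pi.sub_apply, Pi.smul_apply, smul_eq_mul]
    rw [← this]
    rw [Finset.mul_sum, ← Finset.sum_sub_distrib]
    congr 1; ext i; ring
  rw [Finset.sum_congr rfl (fun k _ => step k), Finset.sum_sub_distrib,
    ← Finset.mul_sum]
  congr 1
  -- telescoping
  set f : ℕ → ℝ := fun k => if h : k < N then fbar ⟨k, h⟩ 0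
    else fbar ⟨N - 1, Nat.sub_lt hN Nat.one_pos⟩ (Fin.last (p + 1)) with hf
  have key : ∀ k : Fin N, fbar k (Fin.last (p + 1)) - fbar k 0 = f (k + 1) - f k := by
    intro k
    have hk : (k : ℕ) < N := k.isLt
    have hfk : f k = fbar k 0 := by simp [hf, hk]
    by_cases h1 : (k : ℕ) + 1 < N
    · have : f ((k : ℕ) + 1) = fbar ⟨(k : ℕ) + 1, h1⟩ 0 := by simp [hf, h1]
      rw [this, hfk, ← hinterface k h1]
    · have hkN : (k : ℕ) = N - 1 := by omega
      have : f ((k : ℕ) + 1) = fbar ⟨N - 1, Nat.sub_lt hN Nat.one_pos⟩ (Fin.last (p + 1)) := by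
        simp [hf, h1]
      rw [this, hfk]
      congr 2
      exact Fin.ext hkN
  congr 1
  calc ∑ k : Fin N, (fbar k (Fin.last (p + 1)) - fbar k 0)
      = ∑ k : Fin N, (f ((k : ℕ) + 1) - f k) := Finset.sum_congr rfl (fun k _ => key k)
    _ = ∑ k ∈ Finset.range N, (f (k + 1) - f k) := by
        exact Fin.sum_univ_eq_sum_range (fun k => f (k + 1) - f k) N
    _ = f N - f 0 := Finset.sum_range_sub f N
    _ = _ := by
        have h0 : f 0 = fbar ⟨0, hN⟩ 0 := by simp [hf, hN]
        have hNf : f N = fbar ⟨N - 1, Nat.sub_lt hN Nat.one_pos⟩ (Fin.last (p + 1)) := by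
          simp [hf]
        rw [h0, hNf]
end
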